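/- Let α be a real number with 1/2 ≤ α < 1, let x ≥ 2 be a real number, and let k be a natural number such that 2 ≤ x^(2^{−k}) (real power). Then ∑_{i=0}^{k} x^(1 − (1−α)·2^{−i}) ≤ (2/(1−α))·x. (This bounds the total length of all ID arrays of an ideal Interpolation Search Tree with parameter α over all its levels, completing the O(n) space bound of Theorem 1.) -/

import Mathlib

/-!
Write `β = 1 - α` and `r = 2 ^ (-β) < 1`. Since `x ^ (2⁻ᵏ) ≥ 2`, the root `x ^ (2⁻ⁱ)` is at least
`2 ^ 2 ^ (k - i)`, so the `i`-th term `x · (x ^ (2⁻ⁱ)) ^ (-β)` is at most `x · r ^ (k - i + 1)`: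
the terms decay at least geometrically from the top level down. Summing gives at most
`x · r / (1 - r) = x / (2 ^ β - 1)`, and `2 ^ β ≥ 1 + β log 2 ≥ 1 + β / 2`.
-/

open Finset Real

theorem sum_range_pow_sub_add_one_le {K : Type*} [Field K] [LinearOrder K] [IsStrictOrderedRing K]
    {r : K} (hr0 : 0 ≤ r) (hr1 : r < 1) (n : ℕ) :
    ∑ i ∈ range (n + 1), r ^ (n - i + 1) ≤ r / (1 - r) := by
  calc ∑ i ∈ range (n + 1), r ^ (n - i + 1) = ∑ j ∈ range (n + 1), r ^ (1 + j) := by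
        rw [← sum_range_reflect (fun j => r ^ (1 + j))]
        refine sum_congr rfl fun i _ => ?_
        rw [add_tsub_cancel_right, add_comm]
    _ = ∑ j ∈ Ico 1 (n + 2), r ^ j := by rw [sum_Ico_eq_sum_range]; rfl
    _ ≤ r / (1 - r) := by simpa using geom_sum_Ico_le_of_lt_one (m := 1) (n := n + 2) hr0 hr1

theorem one_add_half_mul_le_two_rpow {β : ℝ} (hβ : 0 ≤ β) : 1 + β / 2 ≤ (2 : ℝ) ^ β := by
  have hlog : 1 / 2 < log 2 := by linarith [log_two_gt_d9]
  calc 1 + β / 2 ≤ β * log 2 + 1 := by nlinarith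
    _ ≤ (2 : ℝ) ^ β := by rw [rpow_def_of_pos two_pos, mul_comm]; exact add_one_le_exp _

theorem two_rpow_neg_div_one_sub_le {β : ℝ} (hβ : 0 < β) :
    (2 : ℝ) ^ (-β) / (1 - (2 : ℝ) ^ (-β)) ≤ 2 / β := by
  have h := one_add_half_mul_le_two_rpow hβ.le
  have hpos : 0 < (2 : ℝ) ^ β - 1 := by linarith
  calc (2 : ℝ) ^ (-β) / (1 - (2 : ℝ) ^ (-β)) = 1 / ((2 : ℝ) ^ β - 1) := by
        rw [rpow_neg zero_le_two]
        field_simp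
    _ ≤ 2 / β := by rw [div_le_div_iff₀ hpos hβ]; linarith

theorem rpow_inv_two_pow_eq_pow {x : ℝ} (hx : 0 ≤ x) {i k : ℕ} (hik : i ≤ k) :
    x ^ ((2 : ℝ) ^ i)⁻¹ = (x ^ ((2 : ℝ) ^ k)⁻¹) ^ 2 ^ (k - i) := by
  rw [← rpow_mul_natCast hx]
  congr 1
  push_cast
  rw [pow_sub₀ _ two_ne_zero hik]
  field_simp

theorem rpow_one_sub_mul_inv_two_pow_le {x β : ℝ} (hx : 0 < x) (hβ : 0 ≤ β) {i k : ℕ}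
    (hik : i ≤ k) (hk : 2 ≤ x ^ ((2 : ℝ) ^ k)⁻¹) :
    x ^ (1 - β * ((2 : ℝ) ^ i)⁻¹) ≤ x * ((2 : ℝ) ^ (-β)) ^ (k - i + 1) := by
  have hroot : (2 : ℝ) ^ 2 ^ (k - i) ≤ x ^ ((2 : ℝ) ^ i)⁻¹ := by
    rw [rpow_inv_two_pow_eq_pow hx.le hik]
    exact pow_le_pow_left₀ zero_le_two hk _
  calc x ^ (1 - β * ((2 : ℝ) ^ i)⁻¹) = x * (x ^ ((2 : ℝ) ^ i)⁻¹) ^ (-β) := by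
        rw [sub_eq_add_neg, rpow_add hx, rpow_one, ← rpow_mul hx.le]
        ring_nf
    _ ≤ x * ((2 : ℝ) ^ 2 ^ (k - i)) ^ (-β) :=
        mul_le_mul_of_nonneg_left (rpow_le_rpow_of_nonpos (by positivity) hroot
          (neg_nonpos.mpr hβ)) hx.le
    _ = x * ((2 : ℝ) ^ (-β)) ^ 2 ^ (k - i) := by rw [rpow_pow_comm zero_le_two]
    _ ≤ x * ((2 : ℝ) ^ (-β)) ^ (k - i + 1) :=
        mul_le_mul_of_nonneg_left (pow_le_pow_of_le_one (by positivity)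
          (rpow_le_one_of_one_le_of_nonpos one_le_two (neg_nonpos.mpr hβ))
          Nat.lt_two_pow_self) hx.le

theorem ist_total_id_length_le_general (α : ℝ) (hα1 : α < 1)
    (x : ℝ) (hx : 2 ≤ x) (k : ℕ) (hk : 2 ≤ x ^ (((2 : ℝ) ^ k)⁻¹)) :
    ∑ i ∈ Finset.range (k + 1), x ^ (1 - (1 - α) * ((2 : ℝ) ^ i)⁻¹) ≤
      (2 / (1 - α)) * x := by
  have hx0 : 0 < x := by linarith
  have hβ : 0 < 1 - α := sub_pos.mpr hα1
  set r : ℝ := (2 : ℝ) ^ (-(1 - α))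
  have hr1 : r < 1 := rpow_lt_one_of_one_lt_of_neg one_lt_two (neg_neg_of_pos hβ)
  calc ∑ i ∈ range (k + 1), x ^ (1 - (1 - α) * ((2 : ℝ) ^ i)⁻¹)
      ≤ ∑ i ∈ range (k + 1), x * r ^ (k - i + 1) := sum_le_sum fun i hi =>
        rpow_one_sub_mul_inv_two_pow_le hx0 hβ.le (Nat.lt_succ_iff.mp (mem_range.mp hi)) hk
    _ = x * ∑ i ∈ range (k + 1), r ^ (k - i + 1) := (mul_sum ..).symm
    _ ≤ x * (r / (1 - r)) :=
        mul_le_mul_of_nonneg_left (sum_range_pow_sub_add_one_le (by positivity) hr1 k) hx0.le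
    _ ≤ x * (2 / (1 - α)) := mul_le_mul_of_nonneg_left (two_rpow_neg_div_one_sub_le hβ) hx0.le
    _ = 2 / (1 - α) * x := mul_comm ..

theorem ist_total_id_length_le (α : ℝ) (hα : 1 / 2 ≤ α) (hα1 : α < 1)
    (x : ℝ) (hx : 2 ≤ x) (k : ℕ) (hk : 2 ≤ x ^ (((2 : ℝ) ^ k)⁻¹)) :
    ∑ i ∈ Finset.range (k + 1), x ^ (1 - (1 - α) * ((2 : ℝ) ^ i)⁻¹) ≤
      (2 / (1 - α)) * x :=
  ist_total_id_length_le_general α hα1 x hx k hk
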